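/- Let C be a finite set with |C| ≥ 2, let {M_c}_{c∈C} be a POVM on ℂ^N, let {E_k}_{k∈K} be a finite Kraus family on ℂ^N with channel E, and let ρ be a density matrix on ℂ^N. Set p_c := Tr[M_c E(ρ)], let c* ∈ C satisfy p_{c*} ≥ p_c for all c ∈ C, and define ε_RLB(ρ) := min_{c ≠ c*} (1/2)(√(p_{c*}) − √(p_c))² and ε*(ρ) := inf { 1 − F(ρ, σ) : σ is a density matrix on ℂ^N and there exists c ≠ c* with Tr[(M_{c*} − M_c) E(σ)] ≤ 0 } (equal to +∞ if no such σ exists). Then: (i) ε_RLB(ρ) ≤ ε*(ρ); and (ii) for every density matrix σ_adv on ℂ^N such that Tr[(M_{c*} − M_c) E(σ_adv)] ≤ 0 for some c ≠ c*, it holds that ε*(ρ) ≤ 1 − F(ρ, σ_adv). -/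

import Mathlib

open Matrix
open scoped ComplexOrder

/-- Positive-semidefinite square root of a matrix (zero if not PSD). -/
noncomputable def psdSqrt {N : ℕ} (A : Matrix (Fin N) (Fin N) ℂ) :
    Matrix (Fin N) (Fin N) ℂ :=
  open scoped Classical in
  if h : A.PosSemidef then
    h.1.eigenvectorUnitary.1 * diagonal ((↑) ∘ (√·) ∘ h.1.eigenvalues) *
      (star h.1.eigenvectorUnitary : Matrix (Fin N) (Fin N) ℂ)
  else 0

/-- Root fidelity `Tr √(√ρ σ √ρ)`. -/
noncomputable def rootFidelity {N : ℕ} (ρ σ : Matrix (Fin N) (Fin N) ℂ) : ℝ :=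
  (psdSqrt (psdSqrt ρ * σ * psdSqrt ρ)).trace.re

/-- Fidelity `F(ρ,σ) = (Tr √(√ρ σ √ρ))²`. -/
noncomputable def fidelity {N : ℕ} (ρ σ : Matrix (Fin N) (Fin N) ℂ) : ℝ :=
  (rootFidelity ρ σ) ^ 2

/-- A density matrix: positive semidefinite with trace one. -/
def IsDensityMatrix {N : ℕ} (ρ : Matrix (Fin N) (Fin N) ℂ) : Prop :=
  ρ.PosSemidef ∧ ρ.trace = 1

/-- A POVM: a family of PSD matrices summing to the identity. -/
def IsPOVM {N : ℕ} {C : Type*} [Fintype C] (M : C → Matrix (Fin N) (Fin N) ℂ) : Prop :=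
  (∀ c, (M c).PosSemidef) ∧ ∑ c, M c = 1

/-- A Kraus family: `∑ Eₖᴴ Eₖ = I`. -/
def IsKrausFamily {N : ℕ} {K : Type*} [Fintype K] (E : K → Matrix (Fin N) (Fin N) ℂ) : Prop :=
  ∑ k, (E k)ᴴ * E k = 1

/-- The quantum channel associated with a Kraus family. -/
noncomputable def channel {N : ℕ} {K : Type*} [Fintype K]
    (E : K → Matrix (Fin N) (Fin N) ℂ) (σ : Matrix (Fin N) (Fin N) ℂ) :
    Matrix (Fin N) (Fin N) ℂ :=
  ∑ k, E k * σ * (E k)ᴴ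

/-- Minimum of `f` over all labels distinct from `cstar` (needs `|C| ≥ 2`). -/
noncomputable def minErase {C : Type*} [Fintype C] [DecidableEq C] {α : Type*} [LinearOrder α]
    (cstar : C) (h : 1 < Fintype.card C) (f : C → α) : α :=
  (Finset.univ.erase cstar).inf'
    ((Finset.erase_nonempty (Finset.mem_univ cstar)).mpr
      (Finset.one_lt_card_iff_nontrivial.mp (by simpa [Finset.card_univ] using h))) f

/-!
In the Heisenberg picture `p c = Tr (M' c ρ)` for the POVM `M' c = ∑ₖ Eₖᴴ (M c) Eₖ`, and a state
`σ` is misclassified towards `c` exactly when `q c* ≤ q c` for `q c = Tr (M' c σ)`. Measuring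
cannot decrease fidelity: taking a contraction `W` with `Wᴴ √σ √ρ = |√σ √ρ|` (polar
decomposition) and applying the Cauchy–Schwarz inequality for the trace inner product to each
outcome gives `√F(ρ, σ) ≤ ∑_c √(p c q c)`. On `{c*, c}` the vectors `√p` and `√q` are
oppositely ordered, so the rearrangement and Cauchy–Schwarz inequalities bound this
Bhattacharyya coefficient by `√(1 - (√(p c*) - √(p c))² / 2)`. The upper bound holds because `ε*` is an infimum.
-/

open scoped MatrixOrder

section Matrix

variable {n : Type*} [Fintype n]

lemma Matrix.re_trace_le_of_le {A B : Matrix n n ℂ} (h : A ≤ B) : A.trace.re ≤ B.trace.re := by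
  have := (le_iff.mp h).trace_nonneg
  rw [trace_sub, sub_nonneg] at this
  exact (Complex.le_def.mp this).1

lemma Matrix.re_trace_mul_conjTranspose_le (X Y : Matrix n n ℂ) :
    (Y * Xᴴ).trace.re ≤ √((X * Xᴴ).trace.re) * √((Y * Yᴴ).trace.re) := by
  classical
  let := toMatrixSeminormedAddCommGroup (1 : Matrix n n ℂ) PosSemidef.one
  let := toMatrixInnerProductSpace (1 : Matrix n n ℂ) PosSemidef.one
  have := re_inner_le_norm (𝕜 := ℂ) X Y
  rw [norm_eq_sqrt_re_inner (𝕜 := ℂ) X, norm_eq_sqrt_re_inner (𝕜 := ℂ) Y] at this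
  change (Y * 1 * Xᴴ).trace.re ≤ √((X * 1 * Xᴴ).trace.re) * √((Y * 1 * Yᴴ).trace.re) at this
  simpa only [Matrix.mul_one] using this

variable [DecidableEq n]

lemma Matrix.PosSemidef.re_trace_mul_nonneg {A B : Matrix n n ℂ} (hA : A.PosSemidef)
    (hB : B.PosSemidef) : 0 ≤ (A * B).trace.re := by
  set S := CFC.sqrt A
  have hS : Sᴴ = S := (CFC.sqrt_nonneg A).isSelfAdjoint.star_eq
  have hSBS : (A * B).trace = (S * B * Sᴴ).trace := by
    rw [hS, trace_mul_cycle, ← CFC.sqrt_mul_sqrt_self A hA.nonneg]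
  exact (Complex.le_def.mp (hSBS ▸ (hB.mul_mul_conjTranspose_same S).trace_nonneg)).1

lemma Matrix.exists_conjTranspose_mul_eq_sqrt (A : Matrix n n ℂ) :
    ∃ W : Matrix n n ℂ, Wᴴ * A = CFC.sqrt (Aᴴ * A) ∧ W * Wᴴ ≤ 1 := by
  obtain ⟨H, hH⟩ : ∃ H, Aᴴ * A = H := ⟨_, rfl⟩
  have hH0 : 0 ≤ H := hH ▸ (posSemidef_conjTranspose_mul_self A).nonneg
  have hcont (f : ℝ → ℝ) : ContinuousOn f (spectrum ℝ H) :=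
    H.finite_real_spectrum.continuousOn f
  -- `(√·)⁻¹` is a pseudo-inverse of `√·` because `(√0)⁻¹ = 0`
  set g : ℝ → ℝ := fun x => (√x)⁻¹
  have hg_mul (x : ℝ) : g x * x = √x := by rw [inv_mul_eq_div, Real.div_sqrt]
  have hg (x : ℝ) : g x * g x * x * g x = g x := by
    rw [mul_assoc (g x), hg_mul]
    rcases eq_or_ne (√x) 0 with h | h <;> simp [g, h]
  set P := cfc g H
  have hP : Pᴴ = P := (cfc_predicate g H).star_eq
  have hPHP : P * P * H * P = P := by
    calc P * P * H * P = cfc (fun x => g x * g x * x * g x) H := by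
          rw [cfc_mul (fun x => g x * g x * x) g H (hcont _) (hcont _),
            cfc_mul (fun x => g x * g x) (fun x => x) H (hcont _) (hcont _),
            cfc_mul g g H (hcont _) (hcont _), cfc_id' ℝ H]
      _ = P := cfc_congr fun x _ => hg x
  refine ⟨A * P, ?_, ?_⟩
  · rw [conjTranspose_mul, hP, Matrix.mul_assoc, hH, CFC.sqrt_eq_real_sqrt H, cfcₙ_eq_cfc]
    conv_lhs => rw [← cfc_id' ℝ H (ha := hH0.isSelfAdjoint)]
    rw [← cfc_mul g _ H (hcont _) (hcont _)]
    exact cfc_congr fun x _ => hg_mul x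
  · have hW : A * P * (A * P)ᴴ * (A * P) = A * P := by
      calc A * P * (A * P)ᴴ * (A * P) = A * (P * P * (Aᴴ * A) * P) := by
            simp only [conjTranspose_mul, hP, Matrix.mul_assoc]
        _ = A * P := by rw [hH, hPHP]
    refine IsStarProjection.le_one ⟨?_, IsSelfAdjoint.mul_star_self (A * P)⟩
    rw [IsIdempotentElem, ← Matrix.mul_assoc, hW]

lemma Matrix.re_trace_contraction_mul_le {M W S T : Matrix n n ℂ} (hM : 0 ≤ M)
    (hW : W * Wᴴ ≤ 1) :
    (Wᴴ * Sᴴ * M * T).trace.re ≤ √((M * (S * Sᴴ)).trace.re) * √((M * (T * Tᴴ)).trace.re) := by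
  set m := CFC.sqrt M
  have hm : mᴴ = m := (CFC.sqrt_nonneg M).isSelfAdjoint.star_eq
  have hmm : m * m = M := CFC.sqrt_mul_sqrt_self M
  have hsandwich (X : Matrix n n ℂ) : ((m * X) * (m * X)ᴴ).trace = (M * (X * Xᴴ)).trace := by
    calc ((m * X) * (m * X)ᴴ).trace = (m * (X * Xᴴ * m)).trace := by
          rw [conjTranspose_mul, hm]
          simp only [Matrix.mul_assoc]
      _ = (X * Xᴴ * m * m).trace := trace_mul_comm _ _
      _ = (M * (X * Xᴴ)).trace := by rw [Matrix.mul_assoc _ m m, hmm, trace_mul_comm]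
  have hcontr : (m * S * W) * (m * S * W)ᴴ ≤ (m * S) * (m * S)ᴴ := by
    have h := star_right_conjugate_le_conjugate hW (m * S)
    rw [Matrix.mul_one, ← Matrix.mul_assoc] at h
    rwa [conjTranspose_mul (m * S), ← Matrix.mul_assoc]
  calc (Wᴴ * Sᴴ * M * T).trace.re = ((m * T) * (m * S * W)ᴴ).trace.re := by
        rw [← hmm, show Wᴴ * Sᴴ * (m * m) * T = (Wᴴ * Sᴴ * m) * (m * T) by
          simp only [Matrix.mul_assoc], trace_mul_comm]
        simp only [conjTranspose_mul, hm, Matrix.mul_assoc]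
    _ ≤ √(((m * S * W) * (m * S * W)ᴴ).trace.re) * √(((m * T) * (m * T)ᴴ).trace.re) :=
        re_trace_mul_conjTranspose_le _ _
    _ ≤ √(((m * S) * (m * S)ᴴ).trace.re) * √(((m * T) * (m * T)ᴴ).trace.re) := by
        gcongr ?_ * _
        exact Real.sqrt_le_sqrt (re_trace_le_of_le hcontr)
    _ = √((M * (S * Sᴴ)).trace.re) * √((M * (T * Tᴴ)).trace.re) := by
        rw [hsandwich, hsandwich]

end Matrix

lemma sq_sum_sqrt_mul_sqrt_le {ι : Type*} [Fintype ι] {p q : ι → ℝ}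
    (hp : ∀ i, 0 ≤ p i) (hq : ∀ i, 0 ≤ q i) (hp1 : ∑ i, p i = 1) (hq1 : ∑ i, q i = 1)
    {a b : ι} (hab : a ≠ b) (hpab : p b ≤ p a) (hqab : q a ≤ q b) :
    (∑ i, √(q i) * √(p i)) ^ 2 ≤ 1 - 1 / 2 * (√(p a) - √(p b)) ^ 2 := by
  classical
  set s := (Finset.univ.erase a).erase b
  have hsplit (f : ι → ℝ) : ∑ i, f i = f a + f b + ∑ i ∈ s, f i := by
    rw [← Finset.add_sum_erase _ f (Finset.mem_univ a),
      ← Finset.add_sum_erase _ f (Finset.mem_erase.mpr ⟨hab.symm, Finset.mem_univ b⟩), add_assoc]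
  set P := ∑ i ∈ s, p i
  set Q := ∑ i ∈ s, q i
  have hP : 0 ≤ P := Finset.sum_nonneg fun i _ => hp i
  have hQ : 0 ≤ Q := Finset.sum_nonneg fun i _ => hq i
  have hpsum : √(p a) ^ 2 + √(p b) ^ 2 + P = 1 := by
    rw [Real.sq_sqrt (hp a), Real.sq_sqrt (hp b), ← hp1, hsplit p]
  have hqsum : √(q a) ^ 2 + √(q b) ^ 2 + Q = 1 := by
    rw [Real.sq_sqrt (hq a), Real.sq_sqrt (hq b), ← hq1, hsplit q]
  have htail : ∑ i ∈ s, √(q i) * √(p i) ≤ √Q * √P := by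
    refine (Real.sum_mul_le_sqrt_mul_sqrt s _ _).trans_eq ?_
    simp only [Real.sq_sqrt (hp _), Real.sq_sqrt (hq _), P, Q]
  -- rearrangement: `√p` and `√q` are oppositely ordered on `{a, b}`
  have hhead : √(q a) * √(p a) + √(q b) * √(p b) ≤
      (√(p a) + √(p b)) * (√(q a) + √(q b)) / 2 := by
    nlinarith [mul_nonneg (sub_nonneg.mpr (Real.sqrt_le_sqrt hpab))
      (sub_nonneg.mpr (Real.sqrt_le_sqrt hqab))]
  set x := √(p a) + √(p b)
  set y := √(q a) + √(q b)
  calc (∑ i, √(q i) * √(p i)) ^ 2 ≤ (x * y / 2 + √Q * √P) ^ 2 := by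
        refine pow_le_pow_left₀ (by positivity) ?_ 2
        rw [hsplit]
        linarith
    _ ≤ (x ^ 2 / 2 + P) * (y ^ 2 / 2 + Q) := by
        nlinarith [sq_nonneg (x * √Q - y * √P), Real.sq_sqrt hP, Real.sq_sqrt hQ]
    _ ≤ (x ^ 2 / 2 + P) * 1 := by
        gcongr
        nlinarith [sq_nonneg (√(q a) - √(q b))]
    _ = 1 - 1 / 2 * (√(p a) - √(p b)) ^ 2 := by
        linear_combination hpsum

section Quantum

variable {N : ℕ}

lemma psdSqrt_eq_sqrt (A : Matrix (Fin N) (Fin N) ℂ) : psdSqrt A = CFC.sqrt A := by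
  by_cases hA : A.PosSemidef
  · rw [psdSqrt, dif_pos hA, CFC.sqrt_eq_real_sqrt A hA.nonneg, cfcₙ_eq_cfc, hA.1.cfc_eq,
      IsHermitian.cfc, Unitary.conjStarAlgAut_apply]
    rfl
  · rw [psdSqrt, dif_neg hA, CFC.sqrt_of_not_nonneg (mt LE.le.posSemidef hA)]

lemma rootFidelity_eq_sqrt (ρ σ : Matrix (Fin N) (Fin N) ℂ) :
    rootFidelity ρ σ = (CFC.sqrt (CFC.sqrt ρ * σ * CFC.sqrt ρ)).trace.re := by
  simp only [rootFidelity, psdSqrt_eq_sqrt]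

lemma rootFidelity_nonneg (ρ σ : Matrix (Fin N) (Fin N) ℂ) : 0 ≤ rootFidelity ρ σ := by
  rw [rootFidelity_eq_sqrt]
  exact (Complex.le_def.mp (CFC.sqrt_nonneg _).posSemidef.trace_nonneg).1

lemma rootFidelity_le_sum_sqrt_mul_sqrt {C : Type*} [Fintype C]
    {M : C → Matrix (Fin N) (Fin N) ℂ} (hM : IsPOVM M) {ρ σ : Matrix (Fin N) (Fin N) ℂ}
    (hρ : ρ.PosSemidef) (hσ : σ.PosSemidef) :
    rootFidelity ρ σ ≤ ∑ c, √((M c * σ).trace.re) * √((M c * ρ).trace.re) := by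
  set sρ := CFC.sqrt ρ
  set sσ := CFC.sqrt σ
  have hsρ : sρᴴ = sρ := (CFC.sqrt_nonneg ρ).isSelfAdjoint.star_eq
  have hsσ : sσᴴ = sσ := (CFC.sqrt_nonneg σ).isSelfAdjoint.star_eq
  have hsρρ : sρ * sρᴴ = ρ := by rw [hsρ, CFC.sqrt_mul_sqrt_self ρ hρ.nonneg]
  have hsσσ : sσ * sσᴴ = σ := by rw [hsσ, CFC.sqrt_mul_sqrt_self σ hσ.nonneg]
  obtain ⟨W, hWA, hW⟩ := exists_conjTranspose_mul_eq_sqrt (sσ * sρ)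
  have hA : (sσ * sρ)ᴴ * (sσ * sρ) = sρ * σ * sρ := by
    rw [conjTranspose_mul, hsρ, ← hsσσ, hsσ]
    simp only [Matrix.mul_assoc]
  calc rootFidelity ρ σ = (Wᴴ * (sσ * sρ)).trace.re := by rw [rootFidelity_eq_sqrt, hWA, hA]
    _ = ∑ c, (Wᴴ * sσᴴ * M c * sρ).trace.re := by
        rw [← Complex.re_sum, ← trace_sum, ← Finset.sum_mul, ← Finset.mul_sum, hM.2, hsσ,
          Matrix.mul_one, Matrix.mul_assoc]
    _ ≤ ∑ c, √((M c * (sσ * sσᴴ)).trace.re) * √((M c * (sρ * sρᴴ)).trace.re) :=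
        Finset.sum_le_sum fun c _ => re_trace_contraction_mul_le (hM.1 c).nonneg hW
    _ = ∑ c, √((M c * σ).trace.re) * √((M c * ρ).trace.re) := by rw [hsρρ, hsσσ]

lemma IsPOVM.sum_re_trace_mul {C : Type*} [Fintype C] {M : C → Matrix (Fin N) (Fin N) ℂ}
    (hM : IsPOVM M) {ρ : Matrix (Fin N) (Fin N) ℂ} (hρ : ρ.trace = 1) :
    ∑ c, (M c * ρ).trace.re = 1 := by
  rw [← Complex.re_sum, ← trace_sum, ← Finset.sum_mul, hM.2, Matrix.one_mul, hρ, Complex.one_re]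

lemma fidelity_le_one_sub_of_isPOVM {C : Type*} [Fintype C]
    {M : C → Matrix (Fin N) (Fin N) ℂ} (hM : IsPOVM M) {ρ σ : Matrix (Fin N) (Fin N) ℂ}
    (hρ : IsDensityMatrix ρ) (hσ : IsDensityMatrix σ) {a b : C} (hab : a ≠ b)
    (hρab : (M b * ρ).trace.re ≤ (M a * ρ).trace.re)
    (hσab : (M a * σ).trace.re ≤ (M b * σ).trace.re) :
    fidelity ρ σ ≤ 1 - 1 / 2 * (√((M a * ρ).trace.re) - √((M b * ρ).trace.re)) ^ 2 :=
  calc fidelity ρ σ ≤ (∑ c, √((M c * σ).trace.re) * √((M c * ρ).trace.re)) ^ 2 :=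
        pow_le_pow_left₀ (rootFidelity_nonneg ρ σ)
          (rootFidelity_le_sum_sqrt_mul_sqrt hM hρ.1 hσ.1) 2
    _ ≤ _ := sq_sum_sqrt_mul_sqrt_le (fun c => (hM.1 c).re_trace_mul_nonneg hρ.1)
        (fun c => (hM.1 c).re_trace_mul_nonneg hσ.1) (hM.sum_re_trace_mul hρ.2)
        (hM.sum_re_trace_mul hσ.2) hab hρab hσab

section Channel

variable {K : Type*} [Fintype K]

def dualChannel (E : K → Matrix (Fin N) (Fin N) ℂ) (X : Matrix (Fin N) (Fin N) ℂ) :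
    Matrix (Fin N) (Fin N) ℂ :=
  ∑ k, (E k)ᴴ * X * E k

lemma trace_mul_channel (E : K → Matrix (Fin N) (Fin N) ℂ) (X τ : Matrix (Fin N) (Fin N) ℂ) :
    (X * channel E τ).trace = (dualChannel E X * τ).trace := by
  simp only [channel, dualChannel, Finset.mul_sum, Finset.sum_mul, trace_sum]
  refine Finset.sum_congr rfl fun k _ => ?_
  rw [← Matrix.mul_assoc, ← Matrix.mul_assoc, trace_mul_comm]
  simp only [Matrix.mul_assoc]

lemma IsPOVM.dualChannel {C : Type*} [Fintype C] {M : C → Matrix (Fin N) (Fin N) ℂ}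
    (hM : IsPOVM M) {E : K → Matrix (Fin N) (Fin N) ℂ} (hE : IsKrausFamily E) :
    IsPOVM fun c => dualChannel E (M c) := by
  refine ⟨fun c => posSemidef_sum _ fun k _ => (hM.1 c).conjTranspose_mul_mul_same (E k), ?_⟩
  simp only [_root_.dualChannel]
  rw [Finset.sum_comm]
  simp only [← Finset.sum_mul, ← Finset.mul_sum, hM.2, Matrix.mul_one]
  exact hE

end Channel

end Quantum

lemma minErase_le {C : Type*} [Fintype C] [DecidableEq C] {α : Type*} [LinearOrder α]
    {cstar : C} (h : 1 < Fintype.card C) (f : C → α) {c : C} (hc : c ≠ cstar) :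
    minErase cstar h f ≤ f c :=
  Finset.inf'_le f (Finset.mem_erase.mpr ⟨hc, Finset.mem_univ c⟩)

/-- **Sandwich robustness bound** `ε_RLB(ρ) ≤ ε*(ρ) ≤ ε_RUB(ρ)`:
the certified lower bound from the measurement distribution underestimates the exact
robustness radius, and any adversarially misclassified state gives an upper bound. -/
theorem sandwich_robustness_bound
    {N : ℕ} {C K : Type*} [Fintype C] [DecidableEq C] [Fintype K]
    (hC : 1 < Fintype.card C)
    (M : C → Matrix (Fin N) (Fin N) ℂ) (hM : IsPOVM M)
    (E : K → Matrix (Fin N) (Fin N) ℂ) (hE : IsKrausFamily E)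
    (ρ : Matrix (Fin N) (Fin N) ℂ) (hρ : IsDensityMatrix ρ)
    (p : C → ℝ) (hp : ∀ c, (p c : ℂ) = (M c * channel E ρ).trace)
    (cstar : C) (hcstar : ∀ c, p c ≤ p cstar)
    (εRLB : ℝ)
    (hRLB : εRLB =
      minErase cstar hC fun c => (1 / 2) * (Real.sqrt (p cstar) - Real.sqrt (p c)) ^ 2)
    (εstar : EReal)
    (hstar : εstar = sInf ((fun σ => ((1 - fidelity ρ σ : ℝ) : EReal)) ''
      {σ | IsDensityMatrix σ ∧
        ∃ c, c ≠ cstar ∧ ((M cstar - M c) * channel E σ).trace ≤ 0})) :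
    (εRLB : EReal) ≤ εstar ∧
      ∀ σadv : Matrix (Fin N) (Fin N) ℂ, IsDensityMatrix σadv →
        (∃ c, c ≠ cstar ∧ ((M cstar - M c) * channel E σadv).trace ≤ 0) →
        εstar ≤ ((1 - fidelity ρ σadv : ℝ) : EReal) := by
  have hp' (c : C) : p c = (dualChannel E (M c) * ρ).trace.re := by
    rw [← trace_mul_channel, ← hp, Complex.ofReal_re]
  have hlower (σ : Matrix (Fin N) (Fin N) ℂ) (hσ : IsDensityMatrix σ)
      (hmis : ∃ c, c ≠ cstar ∧ ((M cstar - M c) * channel E σ).trace ≤ 0) :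
      εRLB ≤ 1 - fidelity ρ σ := by
    obtain ⟨c, hc, hmis⟩ := hmis
    rw [Matrix.sub_mul, trace_sub, sub_nonpos, trace_mul_channel, trace_mul_channel] at hmis
    have hF := fidelity_le_one_sub_of_isPOVM (hM.dualChannel hE) hρ hσ (Ne.symm hc)
      (by simpa only [hp'] using hcstar c) (Complex.le_def.mp hmis).1
    rw [← hp', ← hp'] at hF
    rw [hRLB]
    exact (minErase_le hC _ hc).trans (by linarith)
  rw [hstar]
  refine ⟨le_sInf ?_, fun σ hσ hmis => sInf_le ⟨σ, ⟨hσ, hmis⟩, rfl⟩⟩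
  rintro _ ⟨σ, ⟨hσ, hmis⟩, rfl⟩
  exact EReal.coe_le_coe_iff.mpr (hlower σ hσ hmis)
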